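/- arXiv:1501.07882 — 3 statements merged into one kernel-verified Lean document; each statement's English description precedes it below -/
import Mathlib

section
/- (Leading coefficient ideal characterization.) G is a Gröbner basis of M if and only if for every α ∈ ℕ^n and 1 ≤ u ≤ m, the left ideal ⟨α,M⟩_u := ⟨ lc(f) : f ∈ M, ind(lm(f)) = u, exp(lm(f)) = α ⟩ of R equals the left ideal J_u := ⟨ σ^β(lc(g)) c_{β,g} : g ∈ G, ind(lm(g)) = u, β + exp(lm(g)) = α ⟩. -/
namespace SPBW

/-- Monomials of the free module `A^m` over a σ-PBW extension in `n` variables: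
pairs `(α, i)` representing `x^α e_i`. -/
abbrev Mon (n m : ℕ) := (Fin n → ℕ) × Fin m

/-- A presentation of the ring `A` as a σ-PBW (skew PBW) extension of `R`
in variables `x_1, …, x_n` (Definition 1 together with Theorem 6). -/
structure Ext (R A : Type*) [Ring R] [Ring A] (n : ℕ) where
  /-- the inclusion `R ⊆ A` -/
  φ : R →+* A
  inj : Function.Injective φ
  /-- the variables `x₁, …, xₙ` -/
  x : Fin n → A
  /-- the standard monomials `x^α = x₁^{α₁} ⋯ xₙ^{αₙ}` -/
  mono : (Fin n → ℕ) → A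
  mono_def : ∀ α, mono α = (List.ofFn fun i => x i ^ α i).prod
  /-- coordinates of an element of `A` in the left `R`-basis `Mon(A)` -/
  coord : A → ((Fin n → ℕ) →₀ R)
  coord_add : ∀ a b, coord (a + b) = coord a + coord b
  repr' : ∀ a : A, a = ((coord a).sum fun α r => φ r * mono α)
  coord_eq : ∀ (a : A) (cf : (Fin n → ℕ) →₀ R),
      a = (cf.sum fun α r => φ r * mono α) → coord a = cf
  /-- the injective endomorphisms `σ^α` of Proposition 2 / Theorem 6(a) -/
  σp : (Fin n → ℕ) → R →+* R
  σp_inj : ∀ α, Function.Injective (σp α)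
  /-- the structure constants `c_{α,β}` of Theorem 6(b) -/
  cst : (Fin n → ℕ) → (Fin n → ℕ) → R
  cst_left_inv : ∀ α β, ∃ c', c' * cst α β = 1
  /-- `x^α r = σ^α(r) x^α + p_{α,r}` with `p_{α,r}` of lower degree -/
  mono_mul_r : ∀ (α : Fin n → ℕ) (r : R), ∃ p : A,
      mono α * φ r = φ (σp α r) * mono α + p ∧
      (p = 0 ∨ ((coord p).support.sup fun β => ∑ i, β i) < ∑ i, α i)
  /-- `x^α x^β = c_{α,β} x^{α+β} + p_{α,β}` with `p_{α,β}` of lower degree -/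
  mono_mul : ∀ α β : Fin n → ℕ, ∃ p : A,
      mono α * mono β = φ (cst α β) * mono (α + β) + p ∧
      (p = 0 ∨ ((coord p).support.sup fun γ => ∑ i, γ i) < ∑ i, (α + β) i)

/-- A quasi-commutative σ-PBW extension: `x^α r = σ^α(r) x^α` and
`x^α x^β = c_{α,β} x^{α+β}` exactly (Remark 7(iii)). -/
structure QCExt (R A : Type*) [Ring R] [Ring A] (n : ℕ) extends Ext R A n where
  mono_mul_r' : ∀ (α : Fin n → ℕ) (r : R), mono α * φ r = φ (σp α r) * mono α
  mono_mul' : ∀ α β : Fin n → ℕ, mono α * mono β = φ (cst α β) * mono (α + β)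

/-- A bijective quasi-commutative σ-PBW extension: moreover all `σ^α` are
bijective and all structure constants `c_{α,β}` are invertible. -/
structure QCBijExt (R A : Type*) [Ring R] [Ring A] (n : ℕ) extends QCExt R A n where
  σp_bij : ∀ α, Function.Bijective (σp α)
  cst_unit : ∀ α β, IsUnit (cst α β)

/-- `le` is a monomial order on `Mon(A^m)` (Definition 15): a (total) order
compatible with multiplication by monomials, with `x^β x^α e_i ⪰ x^α e_i`,
and degree compatible. -/
structure IsMonomialOrder (n m : ℕ) (le : Mon n m → Mon n m → Prop) : Prop where
  refl : ∀ X, le X X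
  trans : ∀ X Y Z, le X Y → le Y Z → le X Z
  antisymm : ∀ X Y, le X Y → le Y X → X = Y
  total : ∀ X Y, le X Y ∨ le Y X
  mul_left : ∀ (α β : Fin n → ℕ) (i : Fin m), le (α, i) (β + α, i)
  compat : ∀ (α β : Fin n → ℕ) (i j : Fin m) (γ : Fin n → ℕ),
      le (α, i) (β, j) → le (γ + α, i) (γ + β, j)
  deg_compat : ∀ (α β : Fin n → ℕ) (i j : Fin m),
      (∑ k, α k) < ∑ k, β k → le (α, i) (β, j)

/-- `le` is a monomial order on `Mon(A)` (Definition 9). -/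
structure IsMonomialOrderA (n : ℕ) (le : (Fin n → ℕ) → (Fin n → ℕ) → Prop) : Prop where
  refl : ∀ α, le α α
  trans : ∀ α β γ, le α β → le β γ → le α γ
  antisymm : ∀ α β, le α β → le β α → α = β
  total : ∀ α β, le α β ∨ le β α
  add_compat : ∀ α β γ, le α β → le (γ + α) (γ + β)
  zero_le : ∀ α, le 0 α
  deg_compat : ∀ α β, (∑ i, α i) < ∑ i, β i → le α β

variable {R A : Type*} [Ring R] [Ring A] {n m : ℕ}

/-- `α` is the exponent of the leading monomial of `a ∈ A` w.r.t. the order `leA`. -/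
def IsLMA (E : Ext R A n) (leA : (Fin n → ℕ) → (Fin n → ℕ) → Prop)
    (a : A) (α : Fin n → ℕ) : Prop :=
  E.coord a α ≠ 0 ∧ ∀ β, E.coord a β ≠ 0 → leA β α

/-- `X` is the leading monomial of the vector `f ∈ A^m` w.r.t. the order `le`. -/
def IsLM (E : Ext R A n) (le : Mon n m → Mon n m → Prop)
    (f : Fin m → A) (X : Mon n m) : Prop :=
  E.coord (f X.2) X.1 ≠ 0 ∧
    ∀ (β : Fin n → ℕ) (v : Fin m), E.coord (f v) β ≠ 0 → le (β, v) X

/-- One step reduction `f →_F h` (Definition 20). -/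
def Reduces (E : Ext R A n) (le : Mon n m → Mon n m → Prop)
    (F : Set (Fin m → A)) (f h : Fin m → A) : Prop :=
  ∃ X : Mon n m, IsLM E le f X ∧
    ∃ (t : ℕ) (g : Fin t → Fin m → A) (r : Fin t → R)
      (a : Fin t → Fin n → ℕ) (β : Fin t → Fin n → ℕ),
      (∀ i, g i ∈ F) ∧
      (∀ i, IsLM E le (g i) (β i, X.2)) ∧
      (∀ i, a i + β i = X.1) ∧
      E.coord (f X.2) X.1 =
        ∑ i, r i * (E.σp (a i) (E.coord (g i X.2) (β i)) * E.cst (a i) (β i)) ∧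
      h = f - ∑ i, (E.φ (r i) * E.mono (a i)) • g i

/-- `f` is reduced (minimal) w.r.t. `F`. -/
def Reduced (E : Ext R A n) (le : Mon n m → Mon n m → Prop)
    (F : Set (Fin m → A)) (f : Fin m → A) : Prop :=
  f = 0 ∨ ¬ ∃ h, Reduces E le F f h

/-- `f →_F,+ h`: reduction in finitely many steps. -/
def ReducesStar (E : Ext R A n) (le : Mon n m → Mon n m → Prop)
    (F : Set (Fin m → A)) : (Fin m → A) → (Fin m → A) → Prop :=
  Relation.ReflTransGen (Reduces E le F)

/-- `G` is a Gröbner basis of the submodule `M ⊆ A^m` (Definition 25):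
a finite set of nonzero vectors of `M` such that every nonzero `f ∈ M`
is reducible w.r.t. `G`. -/
def IsGB (E : Ext R A n) (le : Mon n m → Mon n m → Prop)
    (M : Submodule A (Fin m → A)) (G : Finset (Fin m → A)) : Prop :=
  (↑G : Set (Fin m → A)) ⊆ (M : Set (Fin m → A)) \ {0} ∧
    ∀ f ∈ M, f ≠ 0 → ∃ h, Reduces E le (↑G) f h

end SPBW

/-!
If `g` has leading monomial `x^γ e_u`, then every term of `x^β g` other than
`σ^β(lc g) c_{β,γ} x^{β+γ} e_u` is either of lower total degree or the image under `x^β` of a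
lower monomial of `g`; so this coefficient, when nonzero, is the leading coefficient of
`x^β g ∈ M`, and `J_u ⊆ ⟨α,M⟩_u` holds as soon as `G ⊆ M`. A reduction step of `f` with
respect to `G` is exactly a way of writing `lc(f)` as a left `R`-combination of such
coefficients, so "every nonzero `f ∈ M` is reducible" says precisely `⟨α,M⟩_u ⊆ J_u`.
-/

namespace SPBW

variable {R A : Type*} [Ring R] [Ring A] {n m : ℕ}

section Coord

variable (E : Ext R A n)

@[simp] lemma coord_zero : E.coord (0 : A) = 0 :=
  E.coord_eq 0 0 (by simp)

lemma eq_zero_of_coord_eq_zero {a : A} (h : E.coord a = 0) : a = 0 := by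
  simpa [h] using E.repr' a

@[simp] lemma coord_phi_mul_mono (c : R) (ε : Fin n → ℕ) :
    E.coord (E.φ c * E.mono ε) = Finsupp.single ε c :=
  E.coord_eq _ _ (by rw [Finsupp.sum_single_index (by simp)])

lemma coord_finsetSum {ι : Type*} (s : Finset ι) (f : ι → A) :
    E.coord (∑ i ∈ s, f i) = ∑ i ∈ s, E.coord (f i) := by
  classical
  induction s using Finset.induction with
  | empty => simp
  | insert _ _ h ih => rw [Finset.sum_insert h, E.coord_add, ih, Finset.sum_insert h]

lemma eq_sum_phi_coord_mul_mono (a : A) :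
    a = ∑ γ ∈ (E.coord a).support, E.φ (E.coord a γ) * E.mono γ :=
  E.repr' a

lemma coord_phi_mul (r : R) (a : A) (δ : Fin n → ℕ) :
    E.coord (E.φ r * a) δ = r * E.coord a δ := by
  classical
  have hexpand :
      E.φ r * a = ∑ γ ∈ (E.coord a).support, E.φ (r * E.coord a γ) * E.mono γ := by
    conv_lhs => rw [eq_sum_phi_coord_mul_mono E a]
    rw [Finset.mul_sum]
    exact Finset.sum_congr rfl fun γ _ => by rw [← mul_assoc, ← map_mul]
  rw [hexpand, coord_finsetSum, Finset.sum_apply']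
  simp only [coord_phi_mul_mono, Finsupp.single_apply, Finset.sum_ite_eq', Finsupp.mem_support_iff]
  split_ifs with h
  · rfl
  · rw [not_not.mp h, mul_zero]

end Coord

lemma sum_add_apply (α β : Fin n → ℕ) : ∑ i, (α + β) i = ∑ i, α i + ∑ i, β i := by
  simp [Finset.sum_add_distrib]

def DegLT (E : Ext R A n) (a : A) (N : ℕ) : Prop :=
  ∀ δ ∈ (E.coord a).support, ∑ i, δ i < N

section DegLT

variable {E : Ext R A n}

lemma degLT_zero (N : ℕ) : DegLT E (0 : A) N := by
  simp [DegLT]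

lemma DegLT.mono {a : A} {N N' : ℕ} (h : DegLT E a N) (hN : N ≤ N') : DegLT E a N' :=
  fun δ hδ => (h δ hδ).trans_le hN

lemma degLT_of_eq_zero_or_sup_lt {a : A} {N : ℕ}
    (h : a = 0 ∨ ((E.coord a).support.sup fun β => ∑ i, β i) < N) : DegLT E a N := by
  rcases h with rfl | h
  · exact degLT_zero N
  · exact fun δ hδ => (Finset.le_sup hδ).trans_lt h

lemma DegLT.add {a b : A} {N : ℕ} (ha : DegLT E a N) (hb : DegLT E b N) :
    DegLT E (a + b) N := by
  intro δ hδ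
  rw [E.coord_add] at hδ
  rcases Finset.mem_union.mp (Finsupp.support_add hδ) with h | h
  exacts [ha δ h, hb δ h]

lemma degLT_finsetSum {ι : Type*} {s : Finset ι} {f : ι → A} {N : ℕ}
    (h : ∀ i ∈ s, DegLT E (f i) N) : DegLT E (∑ i ∈ s, f i) N := by
  classical
  induction s using Finset.induction with
  | empty => simpa using degLT_zero N
  | insert j s hj ih =>
    rw [Finset.sum_insert hj]
    exact (h j (Finset.mem_insert_self _ _)).add (ih fun i hi => h i (Finset.mem_insert_of_mem hi))

lemma DegLT.phi_mul {a : A} {N : ℕ} (r : R) (h : DegLT E a N) : DegLT E (E.φ r * a) N := by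
  intro δ hδ
  refine h δ (Finsupp.mem_support_iff.mpr fun h0 => ?_)
  rw [Finsupp.mem_support_iff, coord_phi_mul, h0, mul_zero] at hδ
  exact hδ rfl

lemma degLT_phi_mul_mono {c : R} {ε : Fin n → ℕ} {N : ℕ} (h : ∑ i, ε i < N) :
    DegLT E (E.φ c * E.mono ε) N := by
  intro δ hδ
  rw [coord_phi_mul_mono] at hδ
  rwa [Finset.mem_singleton.mp (Finsupp.support_single_subset hδ)]

lemma DegLT.mul_mono {p : A} {N : ℕ} (h : DegLT E p N) (γ : Fin n → ℕ) :
    DegLT E (p * E.mono γ) (N + ∑ i, γ i) := by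
  rw [eq_sum_phi_coord_mul_mono E p, Finset.sum_mul]
  refine degLT_finsetSum fun ε hε => ?_
  obtain ⟨q, hq, hqdeg⟩ := E.mono_mul ε γ
  rw [mul_assoc, hq, mul_add, ← mul_assoc, ← map_mul]
  refine DegLT.add (degLT_phi_mul_mono ?_) ((degLT_of_eq_zero_or_sup_lt hqdeg).phi_mul _ |>.mono ?_)
  · rw [sum_add_apply]
    exact Nat.add_lt_add_right (h ε hε) _
  · rw [sum_add_apply]
    exact Nat.add_le_add_right (h ε hε).le _

end DegLT

section MonoMul

variable {E : Ext R A n}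

lemma exists_mono_mul_phi_mul_mono (β γ : Fin n → ℕ) (c : R) :
    ∃ j : A, E.mono β * (E.φ c * E.mono γ)
        = E.φ (E.σp β c * E.cst β γ) * E.mono (β + γ) + j ∧
      DegLT E j (∑ i, β i + ∑ i, γ i) := by
  obtain ⟨p, hp, hpdeg⟩ := E.mono_mul_r β c
  obtain ⟨q, hq, hqdeg⟩ := E.mono_mul β γ
  refine ⟨E.φ (E.σp β c) * q + p * E.mono γ, ?_, ?_⟩
  · rw [← mul_assoc, hp, add_mul, mul_assoc, hq, mul_add, ← mul_assoc, ← map_mul, add_assoc]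
  · refine DegLT.add (DegLT.phi_mul _ ?_) ((degLT_of_eq_zero_or_sup_lt hpdeg).mul_mono γ)
    simpa only [sum_add_apply] using degLT_of_eq_zero_or_sup_lt hqdeg

lemma exists_mono_mul_eq_sum_add (β : Fin n → ℕ) (a : A) :
    ∃ p : A, E.mono β * a
        = (∑ γ ∈ (E.coord a).support,
            E.φ (E.σp β (E.coord a γ) * E.cst β γ) * E.mono (β + γ)) + p ∧
      ∀ δ ∈ (E.coord p).support, ∃ γ ∈ (E.coord a).support,
        ∑ i, δ i < ∑ i, β i + ∑ i, γ i := by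
  choose j hj hjdeg using fun γ => exists_mono_mul_phi_mul_mono (E := E) β γ (E.coord a γ)
  refine ⟨∑ γ ∈ (E.coord a).support, j γ, ?_, fun δ hδ => ?_⟩
  · conv_lhs => rw [eq_sum_phi_coord_mul_mono E a]
    rw [Finset.mul_sum, ← Finset.sum_add_distrib]
    exact Finset.sum_congr rfl fun γ _ => hj γ
  · rw [coord_finsetSum] at hδ
    obtain ⟨γ, hγ, hδγ⟩ := Finsupp.mem_support_finsetSum δ hδ
    exact ⟨γ, hγ, hjdeg γ δ hδγ⟩

lemma coord_mono_mul_add_of_deg_le (β γ₀ : Fin n → ℕ) (a : A)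
    (hmax : ∀ γ ∈ (E.coord a).support, ∑ i, γ i ≤ ∑ i, γ₀ i) :
    E.coord (E.mono β * a) (β + γ₀) = E.σp β (E.coord a γ₀) * E.cst β γ₀ := by
  classical
  obtain ⟨p, hp, hpdeg⟩ := exists_mono_mul_eq_sum_add (E := E) β a
  have hp0 : E.coord p (β + γ₀) = 0 := by
    refine Finsupp.notMem_support_iff.mp fun hmem => ?_
    obtain ⟨γ, hγ, hlt⟩ := hpdeg _ hmem
    rw [sum_add_apply] at hlt
    exact absurd (hmax γ hγ) (by omega)
  rw [hp, E.coord_add, coord_finsetSum, Finsupp.add_apply, Finset.sum_apply', hp0, add_zero]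
  simp only [coord_phi_mul_mono, Finsupp.single_apply, add_right_inj, Finset.sum_ite_eq',
    Finsupp.mem_support_iff]
  split_ifs with h
  · rfl
  · rw [not_not.mp h, map_zero, zero_mul]

lemma exists_of_mem_support_mono_mul {β δ : Fin n → ℕ} {a : A}
    (h : δ ∈ (E.coord (E.mono β * a)).support) :
    ∃ γ ∈ (E.coord a).support, δ = β + γ ∨ ∑ i, δ i < ∑ i, β i + ∑ i, γ i := by
  obtain ⟨p, hp, hpdeg⟩ := exists_mono_mul_eq_sum_add (E := E) β a
  rw [hp, E.coord_add] at h
  rcases Finset.mem_union.mp (Finsupp.support_add h) with h | h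
  · rw [coord_finsetSum] at h
    obtain ⟨γ, hγ, hδγ⟩ := Finsupp.mem_support_finsetSum δ h
    rw [coord_phi_mul_mono] at hδγ
    exact ⟨γ, hγ, .inl (Finset.mem_singleton.mp (Finsupp.support_single_subset hδγ))⟩
  · obtain ⟨γ, hγ, hlt⟩ := hpdeg δ h
    exact ⟨γ, hγ, .inr hlt⟩

end MonoMul

section LeadingMonomial

variable {E : Ext R A n} {le : Mon n m → Mon n m → Prop}

lemma IsMonomialOrder.deg_le_of_le (hle : IsMonomialOrder n m le) {γ γ' : Fin n → ℕ}
    {v v' : Fin m} (h : le (γ, v) (γ', v')) : ∑ i, γ i ≤ ∑ i, γ' i := by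
  by_contra! hlt
  cases hle.antisymm _ _ h (hle.deg_compat γ' γ v' v hlt)
  exact lt_irrefl _ hlt

lemma IsMonomialOrder.exists_max (hle : IsMonomialOrder n m le) {s : Finset (Mon n m)}
    (hs : s.Nonempty) : ∃ X ∈ s, ∀ Y ∈ s, le Y X := by
  classical
  induction s using Finset.induction with
  | empty => simp at hs
  | insert X s _ ih =>
    rcases s.eq_empty_or_nonempty with rfl | hne
    · exact ⟨X, by simp, by simp [hle.refl]⟩
    obtain ⟨Y, hY, hmax⟩ := ih hne
    rcases hle.total X Y with h | h
    · refine ⟨Y, Finset.mem_insert_of_mem hY, fun Z hZ => ?_⟩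
      rcases Finset.mem_insert.mp hZ with rfl | hZ
      exacts [h, hmax Z hZ]
    · refine ⟨X, Finset.mem_insert_self _ _, fun Z hZ => ?_⟩
      rcases Finset.mem_insert.mp hZ with rfl | hZ
      exacts [hle.refl _, hle.trans _ _ _ (hmax Z hZ) h]

lemma exists_isLM (hle : IsMonomialOrder n m le) {f : Fin m → A} (hf : f ≠ 0) :
    ∃ X, IsLM E le f X := by
  classical
  set s : Finset (Mon n m) := Finset.univ.biUnion fun v => (E.coord (f v)).support ×ˢ {v}
  have hmem : ∀ X : Mon n m, X ∈ s ↔ E.coord (f X.2) X.1 ≠ 0 := by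
    rintro ⟨δ, v⟩
    simp [s]
  obtain ⟨v, hv⟩ := Function.ne_iff.mp hf
  obtain ⟨δ, hδ⟩ := Finsupp.ne_iff.mp fun h => hv (eq_zero_of_coord_eq_zero E h)
  obtain ⟨X, hXs, hmax⟩ := hle.exists_max ⟨(δ, v), (hmem (δ, v)).mpr hδ⟩
  exact ⟨X, (hmem X).mp hXs, fun β v h => hmax (β, v) ((hmem (β, v)).mpr h)⟩

lemma IsLM.unique (hle : IsMonomialOrder n m le) {f : Fin m → A} {X Y : Mon n m}
    (hX : IsLM E le f X) (hY : IsLM E le f Y) : X = Y :=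
  hle.antisymm _ _ (hY.2 X.1 X.2 hX.1) (hX.2 Y.1 Y.2 hY.1)

lemma IsLM.coord_mono_mul (hle : IsMonomialOrder n m le) {g : Fin m → A} {γ : Fin n → ℕ}
    {u : Fin m} (hg : IsLM E le g (γ, u)) (β : Fin n → ℕ) :
    E.coord (E.mono β * g u) (β + γ) = E.σp β (E.coord (g u) γ) * E.cst β γ :=
  coord_mono_mul_add_of_deg_le β γ _ fun γ' hγ' =>
    hle.deg_le_of_le (hg.2 γ' u (Finsupp.mem_support_iff.mp hγ'))

lemma IsLM.mono_smul (hle : IsMonomialOrder n m le) {g : Fin m → A} {γ : Fin n → ℕ}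
    {u : Fin m} (hg : IsLM E le g (γ, u)) (β : Fin n → ℕ)
    (hne : E.σp β (E.coord (g u) γ) * E.cst β γ ≠ 0) :
    IsLM E le (E.mono β • g) (β + γ, u) := by
  refine ⟨by simpa [hg.coord_mono_mul hle β] using hne, fun δ v h => ?_⟩
  obtain ⟨γ', hγ', hδ⟩ := exists_of_mem_support_mono_mul (Finsupp.mem_support_iff.mpr h)
  have hγ'le : le (γ', v) (γ, u) := hg.2 γ' v (Finsupp.mem_support_iff.mp hγ')
  rcases hδ with rfl | hlt
  · exact hle.compat γ' γ v u β hγ'le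
  · refine hle.deg_compat _ _ _ _ ?_
    rw [sum_add_apply]
    have := hle.deg_le_of_le hγ'le
    omega

end LeadingMonomial

section LeadingCoeffIdeal

variable (E : Ext R A n) (le : Mon n m → Mon n m → Prop)

/-- `⟨α,M⟩_u` -/
def lcIdeal (M : Set (Fin m → A)) (α : Fin n → ℕ) (u : Fin m) : Submodule R R :=
  Submodule.span R {r : R | ∃ f ∈ M, IsLM E le f (α, u) ∧ r = E.coord (f u) α}

/-- `J_u` at `α`: spanned by the coefficients `σ^β(lc g) c_{β,γ}` of `x^α e_u` in the
products `x^β g` with `β + exp(lm g) = α`. -/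
def shiftedLcIdeal (G : Set (Fin m → A)) (α : Fin n → ℕ) (u : Fin m) : Submodule R R :=
  Submodule.span R {r : R | ∃ g ∈ G, ∃ (β γ : Fin n → ℕ),
    IsLM E le g (γ, u) ∧ β + γ = α ∧ r = E.σp β (E.coord (g u) γ) * E.cst β γ}

variable {E le}

lemma exists_reduces_iff_coord_mem_shiftedLcIdeal (hle : IsMonomialOrder n m le)
    {G : Set (Fin m → A)} {f : Fin m → A} {α : Fin n → ℕ} {u : Fin m}
    (hf : IsLM E le f (α, u)) :
    (∃ h, Reduces E le G f h) ↔ E.coord (f u) α ∈ shiftedLcIdeal E le G α u := by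
  constructor
  · rintro ⟨-, X, hX, t, g, r, β, γ, hgG, hglm, hβγ, hcoord, -⟩
    obtain rfl := hX.unique hle hf
    rw [hcoord]
    exact Submodule.sum_mem _ fun i _ => Submodule.smul_mem _ (r i)
      (Submodule.subset_span ⟨g i, hgG i, β i, γ i, hglm i, hβγ i, rfl⟩)
  · intro hmem
    obtain ⟨t, c, w, hw⟩ := Submodule.mem_span_set'.mp hmem
    choose g hgG β γ hglm hβγ hval using fun i => (w i).2
    refine ⟨_, (α, u), hf, t, g, c, β, γ, hgG, hglm, hβγ, ?_, rfl⟩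
    rw [← hw]
    exact Finset.sum_congr rfl fun i _ => by rw [hval i, smul_eq_mul]

lemma lcIdeal_le_shiftedLcIdeal (hle : IsMonomialOrder n m le) {M G : Set (Fin m → A)}
    (hred : ∀ f ∈ M, f ≠ 0 → ∃ h, Reduces E le G f h) (α : Fin n → ℕ) (u : Fin m) :
    lcIdeal E le M α u ≤ shiftedLcIdeal E le G α u := by
  rw [lcIdeal, Submodule.span_le]
  rintro _ ⟨f, hfM, hf, rfl⟩
  have hf0 : f ≠ 0 := by
    rintro rfl
    simp [IsLM] at hf
  exact (exists_reduces_iff_coord_mem_shiftedLcIdeal hle hf).mp (hred f hfM hf0)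

lemma shiftedLcIdeal_le_lcIdeal (hle : IsMonomialOrder n m le) {M : Submodule A (Fin m → A)}
    {G : Set (Fin m → A)} (hGM : G ⊆ M) (α : Fin n → ℕ) (u : Fin m) :
    shiftedLcIdeal E le G α u ≤ lcIdeal E le M α u := by
  rw [shiftedLcIdeal, Submodule.span_le]
  rintro _ ⟨g, hgG, β, γ, hg, rfl, rfl⟩
  by_cases hne : E.σp β (E.coord (g u) γ) * E.cst β γ = 0
  · rw [SetLike.mem_coe, hne]
    exact Submodule.zero_mem _
  · exact Submodule.subset_span ⟨E.mono β • g, M.smul_mem _ (hGM hgG),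
      hg.mono_smul hle β hne, (hg.coord_mono_mul hle β).symm⟩

end LeadingCoeffIdeal

end SPBW

open SPBW in
theorem grobner_iff_leading_coeff_ideals_general
    (R A : Type*) [Ring R] [Ring A] (n m : ℕ)
    (E : SPBW.Ext R A n)
    (le : Mon n m → Mon n m → Prop) (hle : IsMonomialOrder n m le)
    (M : Submodule A (Fin m → A))
    (G : Finset (Fin m → A))
    (hGM : (↑G : Set (Fin m → A)) ⊆ (M : Set (Fin m → A)) \ {0}) :
    IsGB E le M G ↔
      ∀ (α : Fin n → ℕ) (u : Fin m),
        Submodule.span R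
            {r : R | ∃ f ∈ M, IsLM E le f (α, u) ∧ r = E.coord (f u) α} =
        Submodule.span R
            {r : R | ∃ g ∈ G, ∃ (β γ : Fin n → ℕ),
              IsLM E le g (γ, u) ∧ β + γ = α ∧
              r = E.σp β (E.coord (g u) γ) * E.cst β γ} := by
  change _ ↔ ∀ α u,
    lcIdeal E le (M : Set (Fin m → A)) α u = shiftedLcIdeal E le (G : Set (Fin m → A)) α u
  constructor
  · rintro ⟨-, hred⟩ α u
    exact (lcIdeal_le_shiftedLcIdeal hle hred α u).antisymm
      (shiftedLcIdeal_le_lcIdeal hle (fun g hg => (hGM hg).1) α u)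
  · intro hideal
    refine ⟨hGM, fun f hfM hf => ?_⟩
    obtain ⟨⟨α, u⟩, hlm⟩ := exists_isLM (E := E) hle hf
    rw [exists_reduces_iff_coord_mem_shiftedLcIdeal hle hlm, ← hideal]
    exact Submodule.subset_span ⟨f, hfM, hlm, rfl⟩

open SPBW in
/-- **(Theorem 26, (i) ⟺ (iv).)** `G` is a Gröbner basis of `M ≠ 0` if and only if
for every `α ∈ ℕ^n` and every index `u`, the left ideal
`⟨α,M⟩_u := ⟨ lc(f) : f ∈ M, ind(lm(f)) = u, exp(lm(f)) = α ⟩` of `R` equals the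
left ideal
`J_u := ⟨ σ^β(lc(g)) c_{β,g} : g ∈ G, ind(lm(g)) = u, β + exp(lm(g)) = α ⟩`. -/
theorem grobner_iff_leading_coeff_ideals
    (R A : Type*) [Ring R] [Ring A] [IsNoetherianRing R] (n m : ℕ)
    (E : SPBW.Ext R A n)
    (le : Mon n m → Mon n m → Prop) (hle : IsMonomialOrder n m le)
    (M : Submodule A (Fin m → A)) (hM : M ≠ ⊥)
    (G : Finset (Fin m → A))
    (hGM : (↑G : Set (Fin m → A)) ⊆ (M : Set (Fin m → A)) \ {0}) :
    IsGB E le M G ↔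
      ∀ (α : Fin n → ℕ) (u : Fin m),
        Submodule.span R
            {r : R | ∃ f ∈ M, IsLM E le f (α, u) ∧ r = E.coord (f u) α} =
        Submodule.span R
            {r : R | ∃ g ∈ G, ∃ (β γ : Fin n → ℕ),
              IsLM E le g (γ, u) ∧ β + γ = α ∧
              r = E.σp β (E.coord (g u) γ) * E.cst β γ} :=
  grobner_iff_leading_coeff_ideals_general R A n m E le hle M G hGM
end

section
/- (Syzygies of F from syzygies of a Gröbner basis G.) With F^T = Q^T G^T and G^T = H^T F^T, the syzygy module Syz(F) equals the column module of the block matrix [(Z(G)^T H^T)^T | I_s − (Q^T H^T)^T], where Z(G) is a matrix whose columns generate Syz(G). -/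
open SPBW in
/-- **(Theorem 34.)** Let `A` be a bijective quasi-commutative σ-PBW extension,
`F = [f₁ ⋯ f_s]` a generating set of `M ⊆ A^m`, `G = [g₁ ⋯ g_t]` a Gröbner basis of
`M` with `F^T = Q^T G^T` and `G^T = H^T F^T`, and let the columns of `Z(G)` generate
`Syz(G)`. Then `Syz(F)` equals the column module of the block matrix
`[(Z(G)^T H^T)^T | I_s − (Q^T H^T)^T]`. -/
theorem syzygy_of_F_from_grobner_basis
    (R A : Type*) [Ring R] [Ring A] (n m : ℕ)
    (E : SPBW.QCBijExt R A n)
    (le : Mon n m → Mon n m → Prop) (hle : IsMonomialOrder n m le)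
    (s t l : ℕ)
    (f : Fin s → Fin m → A) (g : Fin t → Fin m → A)
    -- `G` is a Gröbner basis of `M = ⟨f₁, …, f_s⟩`
    (hgM : ∀ i, g i ∈ Submodule.span A (Set.range f))
    (hg0 : ∀ i, g i ≠ 0)
    (hGB : ∀ h ∈ Submodule.span A (Set.range f), h ≠ 0 →
      ∃ h', Reduces E.toExt le (Set.range g) h h')
    -- `F^T = Q^T G^T`
    (Q : Fin t → Fin s → A) (hQ : ∀ k, f k = ∑ i, Q i k • g i)
    -- `G^T = H^T F^T`
    (H : Fin s → Fin t → A) (hH : ∀ i, g i = ∑ k, H k i • f k)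
    -- the columns of `Z(G)` generate `Syz(G)`
    (Z : Fin l → Fin t → A)
    (hZ : ∀ b : Fin t → A,
      (∑ i, b i • g i) = 0 ↔ b ∈ Submodule.span A (Set.range Z)) :
    ∀ a : Fin s → A,
      (∑ k, a k • f k) = 0 ↔
        a ∈ Submodule.span A
          (Set.range (fun v : Fin l => fun k : Fin s => ∑ i, Z v i * H k i) ∪
           Set.range (fun k₀ : Fin s => fun k : Fin s =>
             (if k = k₀ then (1 : A) else 0) - ∑ i, Q i k₀ * H k i)) := by
  intro a
  constructor
  · -- forward: every syzygy of F is in the span of the columns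
    intro ha
    set b : Fin t → A := fun i => ∑ k, a k * Q i k with hb_def
    have hbsyz : (∑ i, b i • g i) = 0 := by
      have h1 : (∑ i, b i • g i) = ∑ k, a k • f k := by
        simp only [hb_def, Finset.sum_smul, mul_smul]
        rw [Finset.sum_comm]
        refine Finset.sum_congr rfl fun k _ => ?_
        rw [hQ k, Finset.smul_sum]
      rw [h1, ha]
    obtain ⟨c, hc⟩ := Submodule.mem_span_range_iff_exists_fun A |>.mp ((hZ b).mp hbsyz)
    have hci : ∀ i, (∑ v, c v * Z v i) = b i := by
      intro i
      have := congrFun hc i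
      simpa [Finset.sum_apply] using this
    have haeq : a = (∑ v, c v • (fun k : Fin s => ∑ i, Z v i * H k i)) +
        (∑ k₀, a k₀ • (fun k : Fin s =>
          (if k = k₀ then (1 : A) else 0) - ∑ i, Q i k₀ * H k i)) := by
      funext k
      simp only [Pi.add_apply, Finset.sum_apply, Pi.smul_apply, smul_eq_mul,
        mul_sub, Finset.sum_sub_distrib, mul_ite, mul_one, mul_zero]
      have e1 : (∑ v, c v * ∑ i, Z v i * H k i) = ∑ i, b i * H k i := by
        simp only [Finset.mul_sum, ← mul_assoc]
        rw [Finset.sum_comm]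
        simp only [← Finset.sum_mul, hci]
      have e2 : (∑ k₀, a k₀ * ∑ i, Q i k₀ * H k i) = ∑ i, b i * H k i := by
        simp only [Finset.mul_sum, ← mul_assoc, hb_def]
        rw [Finset.sum_comm]
        simp only [← Finset.sum_mul]
      have e3 : (∑ k₀, if k = k₀ then a k₀ else 0) = a k := by
        simp [Finset.sum_ite_eq]
      rw [e1, e2, e3]
      abel
    rw [haeq]
    refine Submodule.add_mem _ (Submodule.sum_mem _ fun v _ => Submodule.smul_mem _ _ ?_)
      (Submodule.sum_mem _ fun k₀ _ => Submodule.smul_mem _ _ ?_)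
    · exact Submodule.subset_span (Or.inl ⟨v, rfl⟩)
    · exact Submodule.subset_span (Or.inr ⟨k₀, rfl⟩)
  · -- backward: every column is a syzygy of F
    intro hmem
    induction hmem using Submodule.span_induction with
    | mem x hx =>
      rcases hx with ⟨v, rfl⟩ | ⟨k₀, rfl⟩
      · have hZv : (∑ i, Z v i • g i) = 0 :=
          (hZ (Z v)).mpr (Submodule.subset_span ⟨v, rfl⟩)
        calc (∑ k, (∑ i, Z v i * H k i) • f k)
            = ∑ k, ∑ i, Z v i • (H k i • f k) := by
              simp [Finset.sum_smul, mul_smul]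
          _ = ∑ i, Z v i • (∑ k, H k i • f k) := by
              rw [Finset.sum_comm]; simp [Finset.smul_sum]
          _ = ∑ i, Z v i • g i := by
              refine Finset.sum_congr rfl fun i _ => ?_; rw [← hH i]
          _ = 0 := hZv
      · have h2 : (∑ k, (∑ i, Q i k₀ * H k i) • f k) = f k₀ := by
          calc (∑ k, (∑ i, Q i k₀ * H k i) • f k)
              = ∑ k, ∑ i, Q i k₀ • (H k i • f k) := by
                simp [Finset.sum_smul, mul_smul]
            _ = ∑ i, Q i k₀ • (∑ k, H k i • f k) := by
                rw [Finset.sum_comm]; simp [Finset.smul_sum]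
            _ = ∑ i, Q i k₀ • g i := by
                refine Finset.sum_congr rfl fun i _ => ?_; rw [← hH i]
            _ = f k₀ := (hQ k₀).symm
        have h1 : (∑ k, (if k = k₀ then (1 : A) else 0) • f k) = f k₀ := by
          simp [ite_smul, Finset.sum_ite_eq]
        simp only [sub_smul, Finset.sum_sub_distrib, h1, h2, sub_self]
    | zero => simp
    | add x y _ _ hx hy => simp [add_smul, Finset.sum_add_distrib, hx, hy]
    | smul r x _ hx =>
      have : (∑ k, (r • x) k • f k) = r • ∑ k, x k • f k := by
        simp [Finset.smul_sum, mul_smul]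
      rw [this, hx, smul_zero]
end

section
/- (Syzygies of leading-term matrices from saturated subsets.) Let A be a quasi-commutative bijective σ-PBW extension and L = [c_1 X_1 ⋯ c_t X_t] with X_j = x^{β_j} e_{i_j} monomials of A^m and c_j ∈ R nonzero. A homogeneous generating set for Syz(L) is given by the vectors s_v^J = Σ_{j∈J} b_{vj}^J x^{γ_j} ẽ_j, where J ranges over subsets of {1,…,t} saturated with respect to {X_1,…,X_t} with X_J ≠ 0, γ_j + β_j = exp(X_J), and (b_{vj}^J)_{j∈J} ranges over a generating set of the R-module Syz_R[σ^{γ_j}(c_j) c_{γ_j,β_j} : j ∈ J]. -/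
open SPBW

/-- The exponent of `X_J = lcm{X_j : j ∈ J}`: the componentwise max of the
exponents `β_j`, `j ∈ J`. -/
def supExp {t n : ℕ} (β : Fin t → Fin n → ℕ) (J : Finset (Fin t)) : Fin n → ℕ :=
  fun i => J.sup fun j => β j i

/-- The exponent `γ_j` with `γ_j + β_j = exp(X_J)`. -/
def gammaExp {t n : ℕ} (β : Fin t → Fin n → ℕ) (J : Finset (Fin t)) (j : Fin t) :
    Fin n → ℕ :=
  fun i => supExp β J i - β j i

/-
The syzygy map `h ↦ Σ_j h_j c_j X_j` is homogeneous once `x^α ẽ_j` is given the degree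
`x^{α+β_j} e_{idx j}`, so the homogeneous components of a syzygy are again syzygies.
A homogeneous syzygy of degree `X` is supported on the set `J` of indices with `X_j ∣ X`,
which is saturated. Since the `σ^θ` are bijective and the `c_{θ,γ}` invertible, it can be
written as `x^θ s` with `θ + exp(X_J) = exp(X)` and `s = Σ_{j ∈ J} b_j x^{γ_j} ẽ_j`;
multiplying out, `x^θ` times the single entry of `s L` vanishes, so `(b_j)` is an `R`-syzygy
of `[σ^{γ_j}(c_j) c_{γ_j,β_j} : j ∈ J]` and hence an `R`-combination of `B J`.
-/

noncomputable section

open scoped Classical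

variable {R A : Type*} [Ring R] [Ring A] {n m t : ℕ}

namespace SPBW

namespace Ext

variable (E : Ext R A n)

def coordHom : A →+ ((Fin n → ℕ) →₀ R) := AddMonoidHom.mk' E.coord E.coord_add

theorem coord_zero : E.coord 0 = 0 := map_zero E.coordHom

theorem coord_sum {ι : Type*} (s : Finset ι) (f : ι → A) :
    E.coord (∑ i ∈ s, f i) = ∑ i ∈ s, E.coord (f i) :=
  map_sum E.coordHom f s

theorem coord_phi_mul_mono (r : R) (α : Fin n → ℕ) :
    E.coord (E.φ r * E.mono α) = Finsupp.single α r :=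
  E.coord_eq _ _ (by rw [Finsupp.sum_single_index (by simp)])

theorem eq_zero_of_phi_mul_mono_eq_zero {r : R} {α : Fin n → ℕ}
    (h : E.φ r * E.mono α = 0) : r = 0 := by
  have := E.coord_phi_mul_mono r α
  rwa [h, E.coord_zero, eq_comm, Finsupp.single_eq_zero] at this

end Ext

namespace QCExt

variable (E : QCExt R A n)

theorem mono_mul_phi_mul_mono (θ : Fin n → ℕ) (r : R) (γ : Fin n → ℕ) :
    E.mono θ * (E.φ r * E.mono γ) = E.φ (E.σp θ r * E.cst θ γ) * E.mono (θ + γ) := by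
  rw [← mul_assoc, E.mono_mul_r', mul_assoc, E.mono_mul', ← mul_assoc, ← map_mul]

theorem phi_mul_mono_mul_phi_mul_mono (r : R) (γ : Fin n → ℕ) (c : R) (β : Fin n → ℕ) :
    E.φ r * E.mono γ * (E.φ c * E.mono β) =
      E.φ (r * (E.σp γ c * E.cst γ β)) * E.mono (γ + β) := by
  rw [mul_assoc, E.mono_mul_phi_mul_mono, ← mul_assoc, ← map_mul]

theorem coord_mul_phi_mul_mono (a : A) (r : R) (β δ : Fin n → ℕ) :
    E.coord (a * (E.φ r * E.mono β)) δ =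
      if β ≤ δ then E.coord a (δ - β) * (E.σp (δ - β) r * E.cst (δ - β) β) else 0 := by
  set w : (Fin n → ℕ) → R := fun α => E.coord a α * (E.σp α r * E.cst α β)
  have hexp : a * (E.φ r * E.mono β) =
      ∑ α ∈ (E.coord a).support, E.φ (w α) * E.mono (α + β) := by
    conv_lhs => rw [E.repr' a]
    simp only [Finsupp.sum, Finset.sum_mul, E.phi_mul_mono_mul_phi_mul_mono, w]
  rw [hexp, E.coord_sum]
  simp only [Ext.coord_phi_mul_mono, Finsupp.finsetSum_apply, Finsupp.single_apply]
  split_ifs with hβ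
  · simp_rw [← eq_tsub_iff_add_eq_of_le hβ, Finset.sum_ite_eq', Finsupp.mem_support_iff]
    split_ifs with hα
    · rfl
    · simp [not_not.mp hα]
  · exact Finset.sum_eq_zero fun α _ => if_neg fun h : α + β = δ => hβ (h ▸ le_add_self)

end QCExt

namespace QCBijExt

variable (E : QCBijExt R A n)

theorem exists_σp_mul_cst_eq (θ γ : Fin n → ℕ) (r : R) : ∃ b, E.σp θ b * E.cst θ γ = r := by
  obtain ⟨b, hb⟩ := (E.σp_bij θ).2 (r * ↑(E.cst_unit θ γ).unit⁻¹)
  exact ⟨b, by rw [hb, mul_assoc, IsUnit.val_inv_mul, mul_one]⟩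

theorem eq_zero_of_mono_mul_phi_mul_mono_eq_zero {θ γ : Fin n → ℕ} {r : R}
    (h : E.mono θ * (E.φ r * E.mono γ) = 0) : r = 0 := by
  rw [E.mono_mul_phi_mul_mono] at h
  have h' := E.eq_zero_of_phi_mul_mono_eq_zero h
  rw [(E.cst_unit θ γ).mul_left_eq_zero] at h'
  exact (map_eq_zero_iff _ (E.σp_inj θ)).mp h'

end QCBijExt

end SPBW

theorem le_supExp (β : Fin t → Fin n → ℕ) {J : Finset (Fin t)} {j : Fin t} (hj : j ∈ J) :
    β j ≤ supExp β J :=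
  fun i => Finset.le_sup (f := fun j => β j i) hj

theorem supExp_le {β : Fin t → Fin n → ℕ} {J : Finset (Fin t)} {δ : Fin n → ℕ}
    (h : ∀ j ∈ J, β j ≤ δ) : supExp β J ≤ δ :=
  fun i => Finset.sup_le fun j hj => h j hj i

theorem gammaExp_add (β : Fin t → Fin n → ℕ) {J : Finset (Fin t)} {j : Fin t} (hj : j ∈ J) :
    gammaExp β J j + β j = supExp β J :=
  tsub_add_cancel_of_le (le_supExp β hj)

namespace SPBW

def column (E : Ext R A n) (c : Fin t → R) (idx : Fin t → Fin m) (β : Fin t → Fin n → ℕ)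
    (j : Fin t) : Fin m → A :=
  Pi.single (idx j) (E.φ (c j) * E.mono (β j))

def syzygyGen (E : Ext R A n) (β : Fin t → Fin n → ℕ) (J : Finset (Fin t)) :
    (Fin t → R) →ₛₗ[E.φ] (Fin t → A) where
  toFun b j := E.φ (b j) * E.mono (gammaExp β J j)
  map_add' b b' := funext fun j => by simp [add_mul]
  map_smul' r b := funext fun j => by simp [mul_assoc]

/-- The coefficient of `x^{exp(X_J)}` in `x^{γ_j} · c_j x^{β_j}`. -/
def liftedCoeff (E : Ext R A n) (c : Fin t → R) (β : Fin t → Fin n → ℕ) (J : Finset (Fin t))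
    (j : Fin t) : R :=
  E.σp (gammaExp β J j) (c j) * E.cst (gammaExp β J j) (β j)

def IsSaturated (idx : Fin t → Fin m) (β : Fin t → Fin n → ℕ) (J : Finset (Fin t)) (u : Fin m) :
    Prop :=
  ∀ j, idx j = u → β j ≤ supExp β J → j ∈ J

def syzygyGens (E : Ext R A n) (idx : Fin t → Fin m) (β : Fin t → Fin n → ℕ)
    (B : Finset (Fin t) → Set (Fin t → R)) : Set (Fin t → A) :=
  {s | ∃ (J : Finset (Fin t)) (u : Fin m), J.Nonempty ∧ (∀ j ∈ J, idx j = u) ∧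
    IsSaturated idx β J u ∧ ∃ b ∈ B J, s = syzygyGen E β J b}

/-- The indices `j` with `X_j ∣ X`. -/
def dvdIndices (idx : Fin t → Fin m) (β : Fin t → Fin n → ℕ) (X : Mon n m) : Finset (Fin t) :=
  {j | idx j = X.2 ∧ β j ≤ X.1}

/-- The component of `h` of degree `X`, where `x^α ẽ_j` has degree `x^{α+β_j} e_{idx j}`. -/
def homogComp (E : Ext R A n) (idx : Fin t → Fin m) (β : Fin t → Fin n → ℕ) (h : Fin t → A)
    (X : Mon n m) : Fin t → A :=
  fun j => if j ∈ dvdIndices idx β X then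
    E.φ (E.coord (h j) (X.1 - β j)) * E.mono (X.1 - β j) else 0

def homogSupport (E : Ext R A n) (idx : Fin t → Fin m) (β : Fin t → Fin n → ℕ)
    (h : Fin t → A) : Finset (Mon n m) :=
  Finset.univ.biUnion fun j => (E.coord (h j)).support.image fun α => (α + β j, idx j)

theorem sum_homogComp (E : Ext R A n) (idx : Fin t → Fin m) (β : Fin t → Fin n → ℕ)
    (h : Fin t → A) : ∑ X ∈ homogSupport E idx β h, homogComp E idx β h X = h := by
  funext j
  rw [Finset.sum_apply]
  conv_rhs => rw [E.repr' (h j), Finsupp.sum]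
  symm
  refine Finset.sum_bij_ne_zero (fun α _ _ => (α + β j, idx j)) ?_ ?_ ?_ ?_
  · exact fun α hα _ => Finset.mem_biUnion.2 ⟨j, Finset.mem_univ _, Finset.mem_image_of_mem _ hα⟩
  · exact fun α _ _ α' _ _ hαα' => add_right_cancel (congrArg Prod.fst hαα')
  · intro X _ hX
    have hj : j ∈ dvdIndices idx β X := by
      by_contra hj
      exact hX (if_neg hj)
    simp only [dvdIndices, Finset.mem_filter, Finset.mem_univ, true_and] at hj
    refine ⟨X.1 - β j, ?_, ?_, Prod.ext (tsub_add_cancel_of_le hj.2) hj.1⟩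
    · rw [Finsupp.mem_support_iff]
      intro h0
      simp [homogComp, dvdIndices, hj, h0] at hX
    · simpa [homogComp, dvdIndices, hj] using hX
  · intro α _ _
    simp [homogComp, dvdIndices]

section QuasiCommutative

variable (E : QCExt R A n) (c : Fin t → R) (idx : Fin t → Fin m) (β : Fin t → Fin n → ℕ)

theorem linearCombination_column_apply (h : Fin t → A) (u : Fin m) :
    Fintype.linearCombination A (column E.toExt c idx β) h u =
      ∑ j with idx j = u, h j * (E.φ (c j) * E.mono (β j)) := by
  simp [Fintype.linearCombination_apply, column, Finset.sum_apply, Pi.single_apply,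
    Finset.sum_filter, eq_comm]

theorem linearCombination_column_eq_single {J : Finset (Fin t)} {u : Fin m} {δ : Fin n → ℕ}
    {a : Fin t → R} {α : Fin t → Fin n → ℕ} {s : Fin t → A}
    (hs : ∀ j, s j = if j ∈ J then E.φ (a j) * E.mono (α j) else 0)
    (hJ : ∀ j ∈ J, idx j = u ∧ α j + β j = δ) :
    Fintype.linearCombination A (column E.toExt c idx β) s =
      Pi.single u (E.φ (∑ j ∈ J, a j * (E.σp (α j) (c j) * E.cst (α j) (β j))) * E.mono δ) := by
  funext v
  rw [linearCombination_column_apply, Pi.single_apply, map_sum, Finset.sum_mul]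
  split_ifs with hv
  · subst hv
    have hJv : J ⊆ Finset.univ.filter (idx · = v) := fun j hj => by simp [(hJ j hj).1]
    rw [← Finset.sum_subset hJv fun j _ hj => by rw [hs, if_neg hj, zero_mul]]
    refine Finset.sum_congr rfl fun j hj => ?_
    rw [hs, if_pos hj, E.phi_mul_mono_mul_phi_mul_mono, (hJ j hj).2]
  · refine Finset.sum_eq_zero fun j hj => ?_
    rw [hs, if_neg fun hjJ => hv ((Finset.mem_filter.1 hj).2.symm.trans (hJ j hjJ).1), zero_mul]

theorem coord_linearCombination_column (h : Fin t → A) (X : Mon n m) :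
    E.coord (Fintype.linearCombination A (column E.toExt c idx β) h X.2) X.1 =
      ∑ j ∈ dvdIndices idx β X,
        E.coord (h j) (X.1 - β j) * (E.σp (X.1 - β j) (c j) * E.cst (X.1 - β j) (β j)) := by
  rw [linearCombination_column_apply, E.coord_sum, Finsupp.finsetSum_apply]
  simp only [E.coord_mul_phi_mul_mono]
  rw [← Finset.sum_filter, Finset.filter_filter]
  rfl

theorem linearCombination_homogComp (h : Fin t → A) (X : Mon n m) :
    Fintype.linearCombination A (column E.toExt c idx β) (homogComp E.toExt idx β h X) =
      Pi.single X.2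
        (E.φ (E.coord (Fintype.linearCombination A (column E.toExt c idx β) h X.2) X.1) *
          E.mono X.1) := by
  rw [coord_linearCombination_column]
  refine linearCombination_column_eq_single E c idx β (fun _ => rfl) fun j hj => ?_
  simp only [dvdIndices, Finset.mem_filter, Finset.mem_univ, true_and] at hj
  exact ⟨hj.1, tsub_add_cancel_of_le hj.2⟩

theorem linearCombination_syzygyGen {J : Finset (Fin t)} {u : Fin m} {b : Fin t → R}
    (hJ : ∀ j ∈ J, idx j = u) (hb : ∀ j ∉ J, b j = 0) :
    Fintype.linearCombination A (column E.toExt c idx β) (syzygyGen E.toExt β J b) =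
      Pi.single u (E.φ (∑ j ∈ J, b j * liftedCoeff E.toExt c β J j) * E.mono (supExp β J)) :=
  linearCombination_column_eq_single E c idx β
    (fun j => by by_cases hj : j ∈ J <;> simp [syzygyGen, hj, hb]) fun j hj =>
    ⟨hJ j hj, gammaExp_add β hj⟩

end QuasiCommutative

theorem supExp_dvdIndices_le (idx : Fin t → Fin m) (β : Fin t → Fin n → ℕ) (X : Mon n m) :
    supExp β (dvdIndices idx β X) ≤ X.1 :=
  supExp_le fun _ hj => (Finset.mem_filter.1 hj).2.2

theorem dvdIndices_isSaturated (idx : Fin t → Fin m) (β : Fin t → Fin n → ℕ) (X : Mon n m) :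
    IsSaturated idx β (dvdIndices idx β X) X.2 := fun j hj hle =>
  Finset.mem_filter.2 ⟨Finset.mem_univ j, hj, hle.trans (supExp_dvdIndices_le idx β X)⟩

theorem syzygyGen_mem_span (E : Ext R A n) {idx : Fin t → Fin m} {β : Fin t → Fin n → ℕ}
    {B : Finset (Fin t) → Set (Fin t → R)} {J : Finset (Fin t)} {u : Fin m} {b : Fin t → R}
    (hne : J.Nonempty) (hJ : ∀ j ∈ J, idx j = u) (hsat : IsSaturated idx β J u)
    (hb : b ∈ Submodule.span R (B J)) :
    syzygyGen E β J b ∈ Submodule.span A (syzygyGens E idx β B) := by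
  refine Submodule.span_mono ?_
    (Submodule.image_span_subset_span (syzygyGen E β J) _ (Set.mem_image_of_mem _ hb))
  rintro _ ⟨b, hb, rfl⟩
  exact ⟨J, u, hne, hJ, hsat, b, hb, rfl⟩

section Bijective

variable (E : QCBijExt R A n) (c : Fin t → R) (idx : Fin t → Fin m) (β : Fin t → Fin n → ℕ)

theorem exists_homogComp_eq_smul_syzygyGen (h : Fin t → A) (X : Mon n m) :
    ∃ b : Fin t → R, (∀ j ∉ dvdIndices idx β X, b j = 0) ∧
      homogComp E.toExt idx β h X =
        E.mono (X.1 - supExp β (dvdIndices idx β X)) •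
          syzygyGen E.toExt β (dvdIndices idx β X) b := by
  set J := dvdIndices idx β X
  set θ := X.1 - supExp β J
  choose b hb using fun j =>
    E.exists_σp_mul_cst_eq θ (gammaExp β J j) (E.coord (h j) (X.1 - β j))
  refine ⟨fun j => if j ∈ J then b j else 0, fun j hj => if_neg hj, funext fun j => ?_⟩
  by_cases hj : j ∈ J
  · have hexp : θ + gammaExp β J j = X.1 - β j :=
      tsub_add_tsub_cancel (supExp_dvdIndices_le idx β X) (le_supExp β hj)
    simp only [homogComp, syzygyGen, LinearMap.coe_mk, AddHom.coe_mk, Pi.smul_apply, smul_eq_mul,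
      if_pos (show j ∈ dvdIndices idx β X from hj), if_pos hj, E.mono_mul_phi_mul_mono, hb, hexp]
  · simp [homogComp, syzygyGen, J, hj]

theorem sum_liftedCoeff_eq_zero {J : Finset (Fin t)} {u : Fin m} {b : Fin t → R}
    {θ : Fin n → ℕ} (hJ : ∀ j ∈ J, idx j = u) (hb : ∀ j ∉ J, b j = 0)
    (h0 : Fintype.linearCombination A (column E.toExt c idx β)
      (E.mono θ • syzygyGen E.toExt β J b) = 0) :
    ∑ j ∈ J, b j * liftedCoeff E.toExt c β J j = 0 := by
  rw [map_smul, linearCombination_syzygyGen E.toQCExt c idx β hJ hb] at h0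
  have h0u := congrFun h0 u
  simp only [Pi.smul_apply, Pi.single_eq_same, smul_eq_mul, Pi.zero_apply] at h0u
  exact E.eq_zero_of_mono_mul_phi_mul_mono_eq_zero h0u

theorem homogComp_mem_span {B : Finset (Fin t) → Set (Fin t → R)}
    (hB : ∀ (J : Finset (Fin t)) (u : Fin m), J.Nonempty → (∀ j ∈ J, idx j = u) →
      IsSaturated idx β J u → ∀ b : Fin t → R, (∀ j ∉ J, b j = 0) →
        ∑ j ∈ J, b j * liftedCoeff E.toExt c β J j = 0 → b ∈ Submodule.span R (B J))
    {h : Fin t → A} (hh : Fintype.linearCombination A (column E.toExt c idx β) h = 0)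
    (X : Mon n m) :
    homogComp E.toExt idx β h X ∈ Submodule.span A (syzygyGens E.toExt idx β B) := by
  set J := dvdIndices idx β X
  rcases J.eq_empty_or_nonempty with hempty | hne
  · have hzero : homogComp E.toExt idx β h X = 0 :=
      funext fun j => if_neg (show j ∉ J by simp [hempty])
    rw [hzero]
    exact Submodule.zero_mem _
  have hJ : ∀ j ∈ J, idx j = X.2 := fun j hj => (Finset.mem_filter.1 hj).2.1
  obtain ⟨b, hb, hhb⟩ := exists_homogComp_eq_smul_syzygyGen E idx β h X
  have hsyz := linearCombination_homogComp E.toQCExt c idx β h X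
  rw [hh, hhb] at hsyz
  simp only [Pi.zero_apply, E.coord_zero, Finsupp.coe_zero, map_zero, zero_mul,
    Pi.single_zero] at hsyz
  have hsat := dvdIndices_isSaturated idx β X
  rw [hhb]
  exact Submodule.smul_mem _ _ (syzygyGen_mem_span E.toExt hne hJ hsat
    (hB J X.2 hne hJ hsat b hb (sum_liftedCoeff_eq_zero E c idx β hJ hb hsyz)))

end Bijective

end SPBW

end

theorem syzygy_of_monomial_matrix_saturated_general
    (R A : Type*) [Ring R] [Ring A] (n m : ℕ)
    (E : SPBW.QCBijExt R A n)
    (t : ℕ) (c : Fin t → R)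
    (idx : Fin t → Fin m) (β : Fin t → Fin n → ℕ)
    -- the columns `c_j X_j` of `L`
    (L : Fin t → Fin m → A)
    (hL : ∀ j, L j = fun v =>
      if v = idx j then E.φ (c j) * E.mono (β j) else 0)
    -- `B J` is a generating set of `Syz_R[σ^{γ_j}(c_j) c_{γ_j,β_j} : j ∈ J]`
    (B : Finset (Fin t) → Set (Fin t → R))
    (hB : ∀ (J : Finset (Fin t)) (u : Fin m), J.Nonempty →
      (∀ j ∈ J, idx j = u) →
      (∀ j, idx j = u → (∀ i, β j i ≤ supExp β J i) → j ∈ J) →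
      ∀ b : Fin t → R,
        ((∀ j ∉ J, b j = 0) ∧
          (∑ j ∈ J, b j *
            (E.σp (gammaExp β J j) (c j) * E.cst (gammaExp β J j) (β j))) = 0)
          ↔ b ∈ Submodule.span R (B J)) :
    ∀ h : Fin t → A,
      (∑ j, h j • L j) = 0 ↔
        h ∈ Submodule.span A
          {s : Fin t → A | ∃ (J : Finset (Fin t)) (u : Fin m),
            J.Nonempty ∧ (∀ j ∈ J, idx j = u) ∧
            (∀ j, idx j = u → (∀ i, β j i ≤ supExp β J i) → j ∈ J) ∧
            ∃ b ∈ B J, s = fun j => E.φ (b j) * E.mono (gammaExp β J j)} := by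
  obtain rfl : L = column E.toExt c idx β :=
    funext fun j => (hL j).trans (funext fun v => by simp [column, Pi.single_apply])
  intro h
  change Fintype.linearCombination A (column E.toExt c idx β) h = 0 ↔
    h ∈ Submodule.span A (syzygyGens E.toExt idx β B)
  constructor
  · intro hh
    rw [← sum_homogComp E.toExt idx β h]
    exact Submodule.sum_mem _ fun X _ => homogComp_mem_span E c idx β
      (fun J u hne hJ hsat b hb hsum => (hB J u hne hJ hsat b).1 ⟨hb, hsum⟩) hh X
  · refine fun hh => (Submodule.span_le (p := LinearMap.ker _)).2 ?_ hh
    rintro _ ⟨J, u, hne, hJ, hsat, b, hbB, rfl⟩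
    obtain ⟨hb, hsum⟩ := (hB J u hne hJ hsat b).2 (Submodule.subset_span hbB)
    rw [SetLike.mem_coe, LinearMap.mem_ker,
      linearCombination_syzygyGen E.toQCExt c idx β hJ hb]
    simp only [liftedCoeff, hsum, map_zero, zero_mul, Pi.single_zero]

/-- **(Lemma 38.)** Let `A` be a quasi-commutative bijective σ-PBW extension and
`L = [c₁X₁ ⋯ c_tX_t]` with `X_j = x^{β_j} e_{idx j}` monomials of `A^m` and
`c_j ∈ R` nonzero. A homogeneous generating set for `Syz(L)` is given by the
vectors `s_v^J = Σ_{j∈J} b_{vj}^J x^{γ_j} ẽ_j`, where `J` ranges over subsets of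
`{1,…,t}` saturated w.r.t. `{X₁,…,X_t}` with `X_J ≠ 0` (all indices in `J` equal),
`γ_j + β_j = exp(X_J)`, and `(b_{vj}^J)_{j∈J}` ranges over a generating set
`B J` of the left `R`-module `Syz_R[σ^{γ_j}(c_j) c_{γ_j,β_j} : j ∈ J]`. -/
theorem syzygy_of_monomial_matrix_saturated
    (R A : Type*) [Ring R] [Ring A] (n m : ℕ)
    (E : SPBW.QCBijExt R A n)
    (t : ℕ) (c : Fin t → R) (hc : ∀ j, c j ≠ 0)
    (idx : Fin t → Fin m) (β : Fin t → Fin n → ℕ)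
    -- the columns `c_j X_j` of `L`
    (L : Fin t → Fin m → A)
    (hL : ∀ j, L j = fun v =>
      if v = idx j then E.φ (c j) * E.mono (β j) else 0)
    -- `B J` is a generating set of `Syz_R[σ^{γ_j}(c_j) c_{γ_j,β_j} : j ∈ J]`
    (B : Finset (Fin t) → Set (Fin t → R))
    (hB : ∀ (J : Finset (Fin t)) (u : Fin m), J.Nonempty →
      (∀ j ∈ J, idx j = u) →
      (∀ j, idx j = u → (∀ i, β j i ≤ supExp β J i) → j ∈ J) →
      ∀ b : Fin t → R,
        ((∀ j ∉ J, b j = 0) ∧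
          (∑ j ∈ J, b j *
            (E.σp (gammaExp β J j) (c j) * E.cst (gammaExp β J j) (β j))) = 0)
          ↔ b ∈ Submodule.span R (B J)) :
    ∀ h : Fin t → A,
      (∑ j, h j • L j) = 0 ↔
        h ∈ Submodule.span A
          {s : Fin t → A | ∃ (J : Finset (Fin t)) (u : Fin m),
            J.Nonempty ∧ (∀ j ∈ J, idx j = u) ∧
            (∀ j, idx j = u → (∀ i, β j i ≤ supExp β J i) → j ∈ J) ∧
            ∃ b ∈ B J, s = fun j => E.φ (b j) * E.mono (gammaExp β J j)} :=
  syzygy_of_monomial_matrix_saturated_general R A n m E t c idx β L hL B hB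
end
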